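/- arXiv:2404.18723 — 6 statements merged into one kernel-verified Lean document; each statement's English description precedes it below -/
import Mathlib

section
/- Let f, f' be absolutely continuous on [a,b] and suppose V_1 := ∫_0^π |f''(G(cos θ))| dθ < ∞, where G(t) = a + (b−a)(t+1)/2. Then the Chebyshev coefficients c_j = (2/π) ∫_0^π f(G(cos θ)) cos(jθ) dθ satisfy, for all j ≥ 2, |c_j| ≤ ((b−a)/2)² · 2V_1 / (π (j−1) j (j+1)) · j, i.e. |c_j| ≤ ((b−a)/2)² · 2V_1 / (π (j−1)(j+1)). -/
/-!
With `L = (b - a)/2` and `x θ = G (cos θ) = a + L (cos θ + 1)`, the chain rule gives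
`(f ∘ x)' = -L sin θ · f'(x θ)`. One integration by parts against `cos (jθ)`, followed by
`2 sin θ sin (jθ) = cos ((j-1)θ) - cos ((j+1)θ)`, gives
`∫₀^π f(x θ) cos (jθ) = L/(2j) (A₋ - A₊)` with `A_± = ∫₀^π f'(x θ) cos ((j±1)θ)`.
A second integration by parts bounds `|A_±| ≤ L V₁/(j±1)`, and
`1/(j-1) + 1/(j+1) = 2j/((j-1)(j+1))`.
-/

open Real Set MeasureTheory

section IntegrationByParts

variable {u u' g : ℝ → ℝ}

theorem intervalIntegrable_of_hasDerivAt_of_abs_le {a b : ℝ}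
    (hu : ∀ x, HasDerivAt u (u' x) x) (hg : IntervalIntegrable g volume a b)
    (hle : ∀ x, |u' x| ≤ g x) : IntervalIntegrable u' volume a b := by
  have hmeas : Measurable u' := by
    rw [show u' = deriv u from funext fun x => (hu x).deriv.symm]
    exact measurable_deriv u
  refine hg.mono_fun hmeas.aestronglyMeasurable.restrict (Filter.Eventually.of_forall fun x => ?_)
  simpa only [Real.norm_eq_abs] using (hle x).trans (le_abs_self (g x))

theorem integral_mul_cos_nat_mul_eq {m : ℕ} (hm : m ≠ 0)
    (hu : ∀ x ∈ uIcc 0 π, HasDerivAt u (u' x) x) (hu' : IntervalIntegrable u' volume 0 π) :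
    ∫ θ in (0:ℝ)..π, u θ * cos (m * θ) = -(∫ θ in (0:ℝ)..π, u' θ * sin (m * θ)) / m := by
  have hm' : (m : ℝ) ≠ 0 := Nat.cast_ne_zero.mpr hm
  have hsin : ∀ x ∈ uIcc 0 π, HasDerivAt (fun θ => sin (m * θ) / m) (cos (m * x)) x :=
    fun x _ => ((((hasDerivAt_id' x).const_mul (m : ℝ)).sin).div_const (m : ℝ)).congr_deriv
      (by field_simp)
  have hcos : IntervalIntegrable (fun θ => cos (m * θ)) volume 0 π := by
    apply Continuous.intervalIntegrable; fun_prop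
  rw [intervalIntegral.integral_mul_deriv_eq_deriv_mul hu hsin hu' hcos]
  simp only [sin_nat_mul_pi, mul_zero, sin_zero, zero_div, sub_zero, zero_sub, mul_div_assoc',
    intervalIntegral.integral_div, neg_div]

theorem abs_integral_mul_cos_nat_mul_le {m : ℕ} (hm : m ≠ 0)
    (hu : ∀ x ∈ uIcc 0 π, HasDerivAt u (u' x) x) (hu' : IntervalIntegrable u' volume 0 π) :
    |∫ θ in (0:ℝ)..π, u θ * cos (m * θ)| ≤ (∫ θ in (0:ℝ)..π, |u' θ|) / m := by
  rw [integral_mul_cos_nat_mul_eq hm hu hu', abs_div, abs_neg, Nat.abs_cast]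
  gcongr
  calc |∫ θ in (0:ℝ)..π, u' θ * sin (m * θ)|
      ≤ ∫ θ in (0:ℝ)..π, |u' θ * sin (m * θ)| :=
        intervalIntegral.abs_integral_le_integral_abs pi_pos.le
    _ ≤ ∫ θ in (0:ℝ)..π, |u' θ| := by
        refine intervalIntegral.integral_mono_on pi_pos.le ?_ hu'.abs fun θ _ => ?_
        · exact (hu'.mul_continuousOn (by fun_prop)).abs
        · rw [abs_mul]
          exact mul_le_of_le_one_right (abs_nonneg _) (abs_sin_le_one _)

end IntegrationByParts

section ChebyshevNode

variable {a b : ℝ}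

/-- The affine image `G (cos θ)` of the Chebyshev variable in `[a, b]`. -/
noncomputable def chebyshevNode (a b θ : ℝ) : ℝ := a + (b - a) / 2 * (cos θ + 1)

theorem chebyshevNode_mem_Icc (hab : a ≤ b) (θ : ℝ) : chebyshevNode a b θ ∈ Icc a b := by
  have h₁ := neg_one_le_cos θ
  have h₂ := cos_le_one θ
  constructor <;> unfold chebyshevNode <;> nlinarith

theorem hasDerivAt_chebyshevNode (θ : ℝ) :
    HasDerivAt (chebyshevNode a b) (-((b - a) / 2 * sin θ)) θ :=
  ((((hasDerivAt_cos θ).add_const 1).const_mul ((b - a) / 2)).const_add a).congr_deriv (by ring)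

theorem hasDerivAt_comp_chebyshevNode {φ : ℝ → ℝ} (hab : a ≤ b)
    (hφ : DifferentiableOn ℝ φ (Icc a b)) (θ : ℝ) :
    HasDerivAt (fun t => φ (chebyshevNode a b t))
      (-((b - a) / 2 * sin θ) * derivWithin φ (Icc a b) (chebyshevNode a b θ)) θ := by
  have hmem := chebyshevNode_mem_Icc hab
  have h := (hφ _ (hmem θ)).hasDerivWithinAt.scomp_hasDerivAt θ (hasDerivAt_chebyshevNode θ) hmem
  simpa only [smul_eq_mul, Function.comp_def] using h

/-- The `k = 0` case of the decay bound. -/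
theorem abs_integral_comp_chebyshevNode_mul_cos_le {φ : ℝ → ℝ} (hab : a ≤ b)
    (hφ : DifferentiableOn ℝ φ (Icc a b))
    (hint : IntervalIntegrable (fun θ => |derivWithin φ (Icc a b) (chebyshevNode a b θ)|)
      volume 0 π)
    {m : ℕ} (hm : m ≠ 0) :
    |∫ θ in (0:ℝ)..π, φ (chebyshevNode a b θ) * cos (m * θ)| ≤
      (b - a) / 2 * (∫ θ in (0:ℝ)..π, |derivWithin φ (Icc a b) (chebyshevNode a b θ)|) / m := by
  set φ' := fun θ => derivWithin φ (Icc a b) (chebyshevNode a b θ)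
  have hL : 0 ≤ (b - a) / 2 := by linarith
  have hbound : ∀ θ, |-((b - a) / 2 * sin θ) * φ' θ| ≤ (b - a) / 2 * |φ' θ| := fun θ => by
    rw [abs_mul, abs_neg, abs_mul, abs_of_nonneg hL]
    gcongr
    exact mul_le_of_le_one_right hL (abs_sin_le_one θ)
  have hderiv := hasDerivAt_comp_chebyshevNode hab hφ
  have hu' := intervalIntegrable_of_hasDerivAt_of_abs_le hderiv (hint.const_mul _) hbound
  calc _ ≤ (∫ θ in (0:ℝ)..π, |-((b - a) / 2 * sin θ) * φ' θ|) / m :=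
        abs_integral_mul_cos_nat_mul_le hm (fun θ _ => hderiv θ) hu'
    _ ≤ (∫ θ in (0:ℝ)..π, (b - a) / 2 * |φ' θ|) / m := by
        gcongr
        exact intervalIntegral.integral_mono_on pi_pos.le hu'.abs (hint.const_mul _)
          fun θ _ => hbound θ
    _ = _ := by rw [intervalIntegral.integral_const_mul]

theorem integral_comp_chebyshevNode_mul_cos_eq {f : ℝ → ℝ} (hab : a ≤ b)
    (hf : DifferentiableOn ℝ f (Icc a b)) (hf' : ContinuousOn (derivWithin f (Icc a b)) (Icc a b))
    {j : ℕ} (hj : j ≠ 0) :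
    ∫ θ in (0:ℝ)..π, f (chebyshevNode a b θ) * cos (j * θ) =
      (b - a) / 2 / (2 * j) *
        ((∫ θ in (0:ℝ)..π, derivWithin f (Icc a b) (chebyshevNode a b θ) * cos ((j - 1) * θ)) -
          ∫ θ in (0:ℝ)..π, derivWithin f (Icc a b) (chebyshevNode a b θ) * cos ((j + 1) * θ)) := by
  set f' := fun θ => derivWithin f (Icc a b) (chebyshevNode a b θ)
  have hf'c : Continuous f' := hf'.comp_continuous (by unfold chebyshevNode; fun_prop)
    (chebyshevNode_mem_Icc hab)
  have hint : ∀ c : ℝ, IntervalIntegrable (fun θ => f' θ * cos (c * θ)) volume 0 π := fun c =>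
    (hf'c.mul (by fun_prop)).intervalIntegrable 0 π
  rw [integral_mul_cos_nat_mul_eq hj (fun θ _ => hasDerivAt_comp_chebyshevNode hab hf θ)
      ((by fun_prop : Continuous fun θ => -((b - a) / 2 * sin θ) * f' θ).intervalIntegrable 0 π),
    ← intervalIntegral.integral_sub (hint _) (hint _), ← intervalIntegral.integral_const_mul,
    ← intervalIntegral.integral_neg, ← intervalIntegral.integral_div]
  refine intervalIntegral.integral_congr fun θ _ => ?_
  have hprod := two_mul_sin_mul_sin (j * θ) θ
  rw [show (j : ℝ) * θ - θ = (j - 1) * θ by ring, show (j : ℝ) * θ + θ = (j + 1) * θ by ring]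
    at hprod
  linear_combination (b - a) / 2 / (2 * j) * f' θ * hprod

end ChebyshevNode

/-- `k = 1` case of the decay bound: if `f` and `f'` are absolutely continuous on `[a,b]`
and `V₁ = ∫₀^π |f''(G(cos θ))| dθ < ∞`, then `|c_j| ≤ ((b-a)/2)² · 2V₁/(π(j-1)(j+1))`
for all `j ≥ 2`, where `G(t) = a + (b-a)(t+1)/2`. -/
theorem chebyshev_coeff_decay_k1 (a b : ℝ) (hab : a < b) (f : ℝ → ℝ)
    (hf : DifferentiableOn ℝ f (Icc a b))
    (hf' : DifferentiableOn ℝ (derivWithin f (Icc a b)) (Icc a b))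
    (V₁ : ℝ)
    (hV₁ : V₁ = ∫ θ in (0:ℝ)..π,
      |derivWithin (derivWithin f (Icc a b)) (Icc a b) (a + (b - a) / 2 * (cos θ + 1))|)
    (hVint : IntervalIntegrable (fun θ : ℝ =>
      |derivWithin (derivWithin f (Icc a b)) (Icc a b) (a + (b - a) / 2 * (cos θ + 1))|)
      MeasureTheory.volume 0 π) :
    ∀ j : ℕ, 2 ≤ j →
      |(2 / π) * ∫ θ in (0:ℝ)..π, f (a + (b - a) / 2 * (cos θ + 1)) * cos (j * θ)| ≤
        ((b - a) / 2) ^ 2 * (2 * V₁) / (π * ((j : ℝ) - 1) * ((j : ℝ) + 1)) := by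
  intro j hj
  have hj₂ : (2 : ℝ) ≤ j := by exact_mod_cast hj
  have hcoeff := integral_comp_chebyshevNode_mul_cos_eq hab.le hf hf'.continuousOn (j := j)
    (by omega)
  have hminus := abs_integral_comp_chebyshevNode_mul_cos_le hab.le hf' hVint (m := j - 1)
    (by omega)
  have hplus := abs_integral_comp_chebyshevNode_mul_cos_le hab.le hf' hVint (m := j + 1)
    (by omega)
  simp only [chebyshevNode, ← hV₁] at hcoeff hminus hplus
  push_cast [Nat.cast_sub (by omega : 1 ≤ j)] at hminus hplus
  have hL : 0 < (b - a) / 2 / (2 * j) := div_pos (by linarith) (by linarith)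
  rw [hcoeff, abs_mul, abs_mul, abs_of_pos (by positivity : (0 : ℝ) < 2 / π), abs_of_pos hL]
  calc 2 / π * ((b - a) / 2 / (2 * j) * |_ - _|)
      ≤ 2 / π * ((b - a) / 2 / (2 * j) *
          ((b - a) / 2 * V₁ / (j - 1) + (b - a) / 2 * V₁ / (j + 1))) := by
        gcongr
        exact (abs_sub _ _).trans (add_le_add hminus hplus)
    _ = _ := by
        have : (j : ℝ) - 1 ≠ 0 := by linarith
        field_simp
        ring
end

section
/- Let k ≥ 0 be an integer and suppose f, f', …, f^{(k−1)} are absolutely continuous on [a,b] with V_k := ∫_0^π |f^{(k+1)}(G(cos θ))| dθ < ∞, where G(t) = a + (b−a)(t+1)/2. Then for j ≥ k+1 the Chebyshev coefficients c_j of f∘G satisfy: if k = 2s, |c_j| ≤ ((b−a)/2)^{2s+1} · 2V_k / (π ∏_{i=−s}^{s} (j + 2i)); if k = 2s+1, |c_j| ≤ ((b−a)/2)^{2s+2} · 2V_k / (π ∏_{i=−s}^{s+1} (j + 2i − 1)). -/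
/-!
After the substitution `x = a + (b - a)/2 (cos θ + 1)` a Chebyshev coefficient is a cosine moment
`∫₀^π F(x(θ)) cos jθ dθ`. Integrating by parts gives `(b - a)/(2j) ∫₀^π F'(x(θ)) sin θ sin jθ dθ`,
and `2 sin θ sin jθ = cos (j-1)θ - cos (j+1)θ`, so the `j`-th moment of `F` is `(b - a)/(4j)` times
the difference of the `(j-1)`-th and `(j+1)`-th moments of `F'`. Iterating `k` times and bounding
the last moment by `∫₀^π |f^(k+1)(x(θ))| dθ` gives the claim; the denominators combine through
`1/P_k(j-1) + 1/P_k(j+1) = 2j/P_{k+1}(j)` for `P_k(x) = decayProd k x = (x - k)(x - k + 2)⋯(x + k)`.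
-/

open Real Set MeasureTheory

noncomputable def chebMap (a b θ : ℝ) : ℝ := a + (b - a) / 2 * (cos θ + 1)

/-- `π/2` times the `j`-th Chebyshev coefficient of `F` on `[a, b]`. -/
noncomputable def cosMoment (a b : ℝ) (F : ℝ → ℝ) (j : ℕ) : ℝ :=
  ∫ θ in (0:ℝ)..π, F (chebMap a b θ) * cos (j * θ)

noncomputable def chebL1Norm (a b : ℝ) (g : ℝ → ℝ) : ℝ :=
  ∫ θ in (0:ℝ)..π, |g (chebMap a b θ)|

def decayProd (k : ℕ) (x : ℝ) : ℝ :=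
  ∏ i ∈ Finset.range (k + 1), (x + 2 * i - k)

section ChebMap

variable {a b : ℝ}

theorem chebMap_mem_Icc (hab : a ≤ b) (θ : ℝ) : chebMap a b θ ∈ Icc a b := by
  have := neg_one_le_cos θ
  have := cos_le_one θ
  constructor <;> unfold chebMap <;> nlinarith

theorem mapsTo_chebMap_Ioo (hab : a < b) : MapsTo (chebMap a b) (Ioo 0 π) (Ioo a b) := by
  intro θ hθ
  have hlt : cos θ < 1 := by
    simpa using strictAntiOn_cos ⟨le_rfl, pi_pos.le⟩ ⟨hθ.1.le, hθ.2.le⟩ hθ.1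
  have hgt : -1 < cos θ := by
    simpa using strictAntiOn_cos ⟨hθ.1.le, hθ.2.le⟩ ⟨pi_pos.le, le_rfl⟩ hθ.2
  constructor <;> unfold chebMap <;> nlinarith

theorem continuous_chebMap : Continuous (chebMap a b) := by
  unfold chebMap; fun_prop

theorem hasDerivAt_chebMap (θ : ℝ) :
    HasDerivAt (chebMap a b) ((b - a) / 2 * -sin θ) θ := by
  unfold chebMap
  simpa using (((hasDerivAt_cos θ).add_const 1).const_mul ((b - a) / 2)).const_add a

end ChebMap

theorem decayProd_pos {k : ℕ} {x : ℝ} (hx : (k : ℝ) < x) : 0 < decayProd k x :=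
  Finset.prod_pos fun i _ => by have : (0:ℝ) ≤ i := i.cast_nonneg; linarith

theorem decayProd_succ_eq_mul_left (k : ℕ) (x : ℝ) :
    decayProd (k + 1) x = decayProd k (x - 1) * (x + (k + 1)) := by
  rw [decayProd, Finset.prod_range_succ]
  congr 1
  · exact Finset.prod_congr rfl fun i _ => by push_cast; ring
  · push_cast; ring

theorem decayProd_succ_eq_mul_right (k : ℕ) (x : ℝ) :
    decayProd (k + 1) x = (x - (k + 1)) * decayProd k (x + 1) := by
  rw [decayProd, Finset.prod_range_succ', mul_comm]
  congr 1
  · push_cast; ring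
  · exact Finset.prod_congr rfl fun i _ => by push_cast; ring

theorem inv_decayProd_sub_one_add_inv_decayProd_add_one {k : ℕ} {x : ℝ} (hx : (k : ℝ) + 1 < x) :
    (decayProd k (x - 1))⁻¹ + (decayProd k (x + 1))⁻¹ = 2 * x / decayProd (k + 1) x := by
  have h₁ := decayProd_pos (k := k) (x := x - 1) (by linarith)
  have h₂ := decayProd_pos (k := k) (x := x + 1) (by linarith)
  have h₃ : x + (k + 1) ≠ 0 := by linarith
  -- the factors split off on the left and on the right sum to `2x`
  have hl := decayProd_succ_eq_mul_left k x
  rw [decayProd_succ_eq_mul_right] at hl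
  rw [decayProd_succ_eq_mul_left]
  field_simp
  linear_combination -hl

section IntegrationByParts

variable {a b : ℝ} {F : ℝ → ℝ}

theorem intervalIntegrable_derivWithin_comp_chebMap (hab : a < b)
    (hF : IntervalIntegrable (fun θ => |derivWithin F (Icc a b) (chebMap a b θ)|) volume 0 π) :
    IntervalIntegrable (fun θ => derivWithin F (Icc a b) (chebMap a b θ)) volume 0 π := by
  rw [intervalIntegrable_iff_integrableOn_Ioo_of_le pi_pos.le] at hF ⊢
  have hmeas : AEStronglyMeasurable (fun θ => derivWithin F (Icc a b) (chebMap a b θ))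
      (volume.restrict (Ioo 0 π)) := by
    -- inside `(a, b)` the one-sided derivative is the (measurable) two-sided one
    have hderiv := (measurable_deriv F).comp (continuous_chebMap (a := a) (b := b)).measurable
    refine hderiv.aestronglyMeasurable.congr ?_
    refine ae_restrict_of_forall_mem measurableSet_Ioo fun θ hθ => ?_
    have hx := mapsTo_chebMap_Ioo hab hθ
    exact (derivWithin_of_mem_nhds (Icc_mem_nhds hx.1 hx.2)).symm
  exact hF.mono' hmeas (ae_of_all _ fun θ => (Real.norm_eq_abs _).le)

theorem cosMoment_eq_integral_derivWithin_mul_sin_mul_sin (hab : a ≤ b)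
    (hF : DifferentiableOn ℝ F (Icc a b))
    (hF' : IntervalIntegrable (fun θ => derivWithin F (Icc a b) (chebMap a b θ)) volume 0 π)
    {j : ℕ} (hj : j ≠ 0) :
    cosMoment a b F j = (b - a) / 2 / j *
      ∫ θ in (0:ℝ)..π, derivWithin F (Icc a b) (chebMap a b θ) * (sin θ * sin (j * θ)) := by
  have hj' : (j : ℝ) ≠ 0 := Nat.cast_ne_zero.2 hj
  have hu (θ : ℝ) : HasDerivAt (fun θ => F (chebMap a b θ))
      ((b - a) / 2 * -sin θ * derivWithin F (Icc a b) (chebMap a b θ)) θ := by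
    have := (hF _ (chebMap_mem_Icc hab θ)).hasDerivWithinAt.scomp_hasDerivAt θ
      (hasDerivAt_chebMap θ) (chebMap_mem_Icc hab)
    simpa [Function.comp_def, smul_eq_mul] using this
  have hv (θ : ℝ) : HasDerivAt (fun θ => sin (j * θ) / j) (cos (j * θ)) θ := by
    have := ((hasDerivAt_id θ).const_mul (j : ℝ)).sin.div_const (j : ℝ)
    simpa [hj'] using this
  have hparts := intervalIntegral.integral_mul_deriv_eq_deriv_mul (fun θ _ => hu θ)
    (fun θ _ => hv θ) (hF'.continuousOn_mul (by fun_prop))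
    ((by fun_prop : Continuous fun θ : ℝ => cos (j * θ)).intervalIntegrable 0 π)
  rw [cosMoment, hparts, ← intervalIntegral.integral_const_mul]
  simp only [mul_zero, sin_zero, zero_div, sin_nat_mul_pi, sub_zero, zero_sub,
    ← intervalIntegral.integral_neg]
  refine intervalIntegral.integral_congr fun θ _ => ?_
  field_simp

theorem abs_cosMoment_le_chebL1Norm_derivWithin (hab : a < b) (hF : DifferentiableOn ℝ F (Icc a b))
    (hF' : IntervalIntegrable (fun θ => |derivWithin F (Icc a b) (chebMap a b θ)|) volume 0 π)
    {j : ℕ} (hj : j ≠ 0) :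
    |cosMoment a b F j| ≤ (b - a) / 2 * chebL1Norm a b (derivWithin F (Icc a b)) / j := by
  have hsin (θ : ℝ) : |sin θ * sin (j * θ)| ≤ 1 := by
    rw [abs_mul]; exact mul_le_one₀ (abs_sin_le_one _) (abs_nonneg _) (abs_sin_le_one _)
  have hint : |∫ θ in (0:ℝ)..π, derivWithin F (Icc a b) (chebMap a b θ) * (sin θ * sin (j * θ))|
      ≤ chebL1Norm a b (derivWithin F (Icc a b)) := by
    rw [← Real.norm_eq_abs]
    refine intervalIntegral.norm_integral_le_of_norm_le pi_pos.le (ae_of_all _ fun θ _ => ?_) hF'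
    rw [norm_mul, Real.norm_eq_abs]
    exact mul_le_of_le_one_right (abs_nonneg _) (hsin θ)
  rw [cosMoment_eq_integral_derivWithin_mul_sin_mul_sin hab.le hF
    (intervalIntegrable_derivWithin_comp_chebMap hab hF') hj, abs_mul, mul_div_right_comm,
    abs_of_nonneg (by positivity)]
  gcongr

theorem cosMoment_succ_eq_sub (hab : a ≤ b) (hF : DifferentiableOn ℝ F (Icc a b))
    (hF' : IntervalIntegrable (fun θ => derivWithin F (Icc a b) (chebMap a b θ)) volume 0 π)
    (m : ℕ) :
    cosMoment a b F (m + 1) = (b - a) / 2 / (m + 1) *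
      ((cosMoment a b (derivWithin F (Icc a b)) m -
        cosMoment a b (derivWithin F (Icc a b)) (m + 2)) / 2) := by
  rw [cosMoment_eq_integral_derivWithin_mul_sin_mul_sin hab hF hF' m.add_one_ne_zero]
  push_cast
  congr 1
  rw [cosMoment, cosMoment, ← intervalIntegral.integral_sub (hF'.mul_continuousOn (by fun_prop))
    (hF'.mul_continuousOn (by fun_prop)), ← intervalIntegral.integral_div]
  refine intervalIntegral.integral_congr fun θ _ => ?_
  have := two_mul_sin_mul_sin ((m + 1) * θ) θ
  push_cast
  rw [show (m + 1 : ℝ) * θ - θ = m * θ by ring, show (m + 1 : ℝ) * θ + θ = (m + 2) * θ by ring]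
    at this
  rw [← mul_sub, ← this]
  ring

end IntegrationByParts

theorem abs_cosMoment_le_chebL1Norm_iteratedDerivWithin {a b : ℝ} (hab : a < b) (k : ℕ) {f : ℝ → ℝ}
    (hdiff : ∀ i ≤ k, DifferentiableOn ℝ (iteratedDerivWithin i f (Icc a b)) (Icc a b))
    (hint : IntervalIntegrable
      (fun θ => |iteratedDerivWithin (k + 1) f (Icc a b) (chebMap a b θ)|) volume 0 π)
    {j : ℕ} (hj : k + 1 ≤ j) :
    |cosMoment a b f j| ≤ ((b - a) / 2) ^ (k + 1) *
      chebL1Norm a b (iteratedDerivWithin (k + 1) f (Icc a b)) / decayProd k j := by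
  induction k generalizing f j with
  | zero =>
    simp only [iteratedDerivWithin_one, zero_add, pow_one] at hint ⊢
    have hf : DifferentiableOn ℝ f (Icc a b) := by simpa using hdiff 0 le_rfl
    simpa [decayProd] using abs_cosMoment_le_chebL1Norm_derivWithin hab hf hint (j := j) (by omega)
  | succ k ih =>
    obtain ⟨m, rfl⟩ : ∃ m, j = m + 1 := ⟨j - 1, by omega⟩
    set f₁ := derivWithin f (Icc a b)
    have hf : DifferentiableOn ℝ f (Icc a b) := by simpa using hdiff 0 (Nat.zero_le _)
    have hf₁ : ContinuousOn f₁ (Icc a b) := by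
      simpa using (hdiff 1 (by omega)).continuousOn
    rw [iteratedDerivWithin_succ'] at hint ⊢
    have hint₁ : IntervalIntegrable (fun θ => f₁ (chebMap a b θ)) volume 0 π :=
      (hf₁.comp_continuous continuous_chebMap (chebMap_mem_Icc hab.le)).intervalIntegrable 0 π
    have hdiff₁ (i : ℕ) (hi : i ≤ k) :
        DifferentiableOn ℝ (iteratedDerivWithin i f₁ (Icc a b)) (Icc a b) := by
      simpa [iteratedDerivWithin_succ'] using hdiff (i + 1) (by omega)
    have ih₁ := ih hdiff₁ hint (j := m) (by omega)
    have ih₂ := ih hdiff₁ hint (j := m + 2) (by omega)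
    rw [cosMoment_succ_eq_sub hab.le hf hint₁]
    set c := (b - a) / 2
    set V := chebL1Norm a b (iteratedDerivWithin (k + 1) f₁ (Icc a b))
    have hsum := inv_decayProd_sub_one_add_inv_decayProd_add_one (k := k) (x := m + 1)
      (by exact_mod_cast (by omega : k + 1 < m + 1))
    rw [add_sub_cancel_right, add_assoc, one_add_one_eq_two] at hsum
    push_cast at ih₂ ⊢
    rw [abs_mul, abs_of_nonneg (by positivity : 0 ≤ c / (m + 1)), abs_div, abs_two]
    calc c / (m + 1) * (|cosMoment a b f₁ m - cosMoment a b f₁ (m + 2)| / 2)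
        ≤ c / (m + 1) * ((c ^ (k + 1) * V / decayProd k m +
            c ^ (k + 1) * V / decayProd k (m + 2)) / 2) := by
          gcongr
          exact (abs_sub _ _).trans (add_le_add ih₁ ih₂)
      _ = c ^ (k + 1 + 1) * V / decayProd (k + 1) (m + 1) := by
          rw [div_eq_mul_inv _ (decayProd k m), div_eq_mul_inv _ (decayProd k (m + 2)), ← mul_add,
            hsum]
          field_simp
          ring

/-- General decay bound (Theorem 3.1): if `f, f', …, f^{(k-1)}` are absolutely continuous
on `[a,b]` and `V_k = ∫₀^π |f^{(k+1)}(G(cos θ))| dθ < ∞`, then for `j ≥ k+1` the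
Chebyshev coefficients of `f` on `[a,b]` satisfy
`|c_j| ≤ ((b-a)/2)^{2s+1} · 2V_k/(π ∏_{i=-s}^{s}(j+2i))` if `k = 2s` and
`|c_j| ≤ ((b-a)/2)^{2s+2} · 2V_k/(π ∏_{i=-s}^{s+1}(j+2i-1))` if `k = 2s+1`. -/
theorem chebyshev_coeff_decay_general (a b : ℝ) (hab : a < b) (f : ℝ → ℝ) (k s : ℕ)
    (hdiff : ∀ i ≤ k, DifferentiableOn ℝ (iteratedDerivWithin i f (Icc a b)) (Icc a b))
    (V : ℝ)
    (hV : V = ∫ θ in (0:ℝ)..π,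
      |iteratedDerivWithin (k + 1) f (Icc a b) (a + (b - a) / 2 * (cos θ + 1))|)
    (hVint : IntervalIntegrable (fun θ : ℝ =>
      |iteratedDerivWithin (k + 1) f (Icc a b) (a + (b - a) / 2 * (cos θ + 1))|)
      MeasureTheory.volume 0 π) :
    ∀ j : ℕ, k + 1 ≤ j →
      (k = 2 * s →
        |(2 / π) * ∫ θ in (0:ℝ)..π, f (a + (b - a) / 2 * (cos θ + 1)) * cos (j * θ)| ≤
          ((b - a) / 2) ^ (2 * s + 1) * (2 * V) /
            (π * ∏ i ∈ Finset.range (2 * s + 1), ((j : ℝ) + 2 * i - 2 * s))) ∧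
      (k = 2 * s + 1 →
        |(2 / π) * ∫ θ in (0:ℝ)..π, f (a + (b - a) / 2 * (cos θ + 1)) * cos (j * θ)| ≤
          ((b - a) / 2) ^ (2 * s + 2) * (2 * V) /
            (π * ∏ i ∈ Finset.range (2 * s + 2), ((j : ℝ) + 2 * i - 2 * s - 1))) := by
  intro j hj
  have hcoeff : |2 / π * ∫ θ in (0:ℝ)..π, f (a + (b - a) / 2 * (cos θ + 1)) * cos (j * θ)| ≤
      ((b - a) / 2) ^ (k + 1) * (2 * V) / (π * decayProd k j) := by
    have hmoment : |cosMoment a b f j| ≤ ((b - a) / 2) ^ (k + 1) * V / decayProd k j :=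
      hV ▸ abs_cosMoment_le_chebL1Norm_iteratedDerivWithin hab k hdiff hVint hj
    rw [abs_mul, abs_of_pos (by positivity)]
    calc 2 / π * |cosMoment a b f j|
        ≤ 2 / π * (((b - a) / 2) ^ (k + 1) * V / decayProd k j) := by gcongr
      _ = _ := by ring
  constructor <;> rintro rfl <;> convert hcoeff using 4 <;>
    exact Finset.prod_congr rfl fun i _ => by push_cast; ring
end

section
/- Let g : [a,b] → ℝ be monotonically increasing, G(t) = a + (b−a)(t+1)/2, and j ≥ 1 an integer. Then there exists x_0 ∈ [0, π] such that ∫_0^π g(G(cos θ)) cos(jθ) dθ = ((g(b) − g(a))/j) · sin(j x_0); in particular |∫_0^π g(G(cos θ)) cos(jθ) dθ| ≤ (g(b) − g(a))/j. -/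
/-!
Second mean value theorem by a layer-cake argument. For `f` antitone on `[a, b]` and
`h = f - f b`, Fubini gives `∫ₐᵇ h φ = ∫₀^{f a - f b} (∫_{h > y} φ) dy`; each superlevel set
`{h > y} ∩ (a, b]` is, up to a null set, an interval `(a, t_y]`, so the inner integral is a value
`Φ t_y` of the primitive `Φ t = ∫ₐᵗ φ`. The outer integral is therefore `(f a - f b)` times an
average of values of `Φ` on `[a, b]`, which lies in the interval `Φ '' [a, b]`. With
`φ θ = cos (j θ)` on `[0, π]` and `f θ = g (G (cos θ))` we have `Φ π = 0`, `f 0 = g b`, `f π = g a`.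
-/

open Real Set MeasureTheory

theorem Convex.exists_integral_eq_smul_mem {α E : Type*} [MeasurableSpace α] {μ : Measure α}
    [IsFiniteMeasure μ] [NormedAddCommGroup E] [NormedSpace ℝ E] [CompleteSpace E] {s : Set E}
    (hs : Convex ℝ s) (hsc : IsClosed s) (hne : s.Nonempty) {f : α → E}
    (hfs : ∀ᵐ x ∂μ, f x ∈ s) (hfi : Integrable f μ) :
    ∃ z ∈ s, ∫ x, f x ∂μ = μ.real univ • z := by
  rcases eq_zero_or_neZero μ with rfl | _
  · exact ⟨hne.some, hne.some_mem, by simp⟩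
  · exact ⟨⨍ x, f x ∂μ, hs.average_mem hsc hfs hfi, (measure_smul_average μ f).symm⟩

section LayerCake

variable {α : Type*} [MeasurableSpace α] {μ : Measure α} {h φ : α → ℝ} {c : ℝ}

theorem integrable_indicator_lt_prod (hh : Measurable h) (hφ : Integrable φ μ) :
    Integrable ({p : α × ℝ | p.2 < h p.1}.indicator fun p ↦ φ p.1)
      (μ.prod (volume.restrict (Ioc 0 c))) :=
  (hφ.comp_fst _).indicator (measurableSet_lt measurable_snd (hh.comp measurable_fst))

theorem integral_indicator_lt_eq_setIntegral (hh : Measurable h) (y : ℝ) :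
    ∫ x, {p : α × ℝ | p.2 < h p.1}.indicator (fun p ↦ φ p.1) (x, y) ∂μ =
      ∫ x in {x | y < h x}, φ x ∂μ :=
  integral_indicator (measurableSet_lt measurable_const hh)

theorem integrableOn_setIntegral_lt [SFinite μ] (hh : Measurable h) (hφ : Integrable φ μ) :
    IntegrableOn (fun y ↦ ∫ x in {x | y < h x}, φ x ∂μ) (Ioc 0 c) := by
  simpa only [IntegrableOn, integral_indicator_lt_eq_setIntegral hh] using
    (integrable_indicator_lt_prod (c := c) hh hφ).integral_prod_right

theorem integral_mul_eq_integral_Ioc_setIntegral_lt [SFinite μ] (hh : Measurable h)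
    (h0 : ∀ᵐ x ∂μ, 0 ≤ h x) (hc : ∀ᵐ x ∂μ, h x ≤ c) (hφ : Integrable φ μ) :
    ∫ x, h x * φ x ∂μ = ∫ y in Ioc 0 c, ∫ x in {x | y < h x}, φ x ∂μ := by
  have hlayer : ∀ᵐ x ∂μ, ∫ y in Ioc 0 c, (Iio (h x)).indicator (fun _ ↦ φ x) y = h x * φ x := by
    filter_upwards [h0, hc] with x hx0 hxc
    have hIoo : Ioc 0 c ∩ Iio (h x) = Ioo 0 (h x) := by
      ext y; simp only [mem_inter_iff, mem_Ioc, mem_Iio, mem_Ioo]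
      exact ⟨fun hy ↦ ⟨hy.1.1, hy.2⟩, fun hy ↦ ⟨⟨hy.1, hy.2.le.trans hxc⟩, hy.2⟩⟩
    rw [setIntegral_indicator measurableSet_Iio, hIoo, setIntegral_const,
      Real.volume_real_Ioo_of_le hx0, sub_zero, smul_eq_mul]
  rw [← integral_congr_ae hlayer, integral_integral_swap
    (f := fun x y ↦ (Iio (h x)).indicator (fun _ ↦ φ x) y) (integrable_indicator_lt_prod hh hφ)]
  simp_rw [← integral_indicator_lt_eq_setIntegral hh]
  rfl

end LayerCake

theorem exists_ae_eq_Ioc_of_Ioc_subset {S : Set ℝ} {a b : ℝ} (hab : a ≤ b) (hS : S ⊆ Ioc a b)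
    (hlow : ∀ x ∈ S, Ioc a x ⊆ S) : ∃ t ∈ Icc a b, S =ᵐ[volume] Ioc a t := by
  have hub : ∀ x ∈ insert a S, x ≤ b := forall_mem_insert.2 ⟨hab, fun x hx ↦ (hS hx).2⟩
  have hbdd : BddAbove (insert a S) := ⟨b, hub⟩
  set t := sSup (insert a S)
  have hS_sub : S ⊆ Ioc a t := fun x hx ↦ ⟨(hS hx).1, le_csSup hbdd (mem_insert_of_mem a hx)⟩
  have hIoo_sub : Ioo a t ⊆ S := by
    intro x ⟨hax, hxt⟩
    obtain ⟨y, hy, hxy⟩ := exists_lt_of_lt_csSup (insert_nonempty a S) hxt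
    rcases eq_or_mem_of_mem_insert hy with rfl | hyS
    · exact absurd hxy hax.not_gt
    · exact hlow y hyS ⟨hax, hxy.le⟩
  refine ⟨t, ⟨le_csSup hbdd (mem_insert a S), csSup_le (insert_nonempty a S) hub⟩, ?_⟩
  exact hS_sub.eventuallyLE.antisymm (Ioo_ae_eq_Ioc.symm.le.trans hIoo_sub.eventuallyLE)

theorem Antitone.exists_setIntegral_lt_eq_intervalIntegral {h φ : ℝ → ℝ} {a b : ℝ} (hab : a ≤ b)
    (hh : Antitone h) (y : ℝ) :
    ∃ t ∈ Icc a b,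
      ∫ x in {x | y < h x}, φ x ∂volume.restrict (Ioc a b) = ∫ x in a..t, φ x := by
  obtain ⟨t, ht, hae⟩ := exists_ae_eq_Ioc_of_Ioc_subset (S := {x | y < h x} ∩ Ioc a b) hab
    inter_subset_right fun x hx z hz ↦ ⟨hx.1.trans_le (hh hz.2), hz.1, hz.2.trans hx.2.2⟩
  refine ⟨t, ht, ?_⟩
  rw [Measure.restrict_restrict' measurableSet_Ioc, setIntegral_congr_set hae,
    intervalIntegral.integral_of_le ht.1]

theorem Antitone.exists_intervalIntegral_mul_eq {f φ : ℝ → ℝ} {a b : ℝ} (hab : a ≤ b)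
    (hf : Antitone f) (hφ : IntervalIntegrable φ volume a b) :
    ∃ ξ ∈ Icc a b,
      ∫ x in a..b, f x * φ x = f a * (∫ x in a..ξ, φ x) + f b * ∫ x in ξ..b, φ x := by
  set Φ : ℝ → ℝ := fun t ↦ ∫ x in a..t, φ x
  have hΦ : ContinuousOn Φ (Icc a b) := by
    simpa only [uIcc_of_le hab] using
      intervalIntegral.continuousOn_primitive_interval' hφ left_mem_uIcc
  set h : ℝ → ℝ := fun x ↦ f x - f b
  have hh : Antitone h := fun _ _ hxy ↦ sub_le_sub_right (hf hxy) (f b)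
  have h0 : ∀ᵐ x ∂volume.restrict (Ioc a b), 0 ≤ h x :=
    ae_restrict_of_forall_mem measurableSet_Ioc fun x hx ↦ sub_nonneg.2 (hf hx.2)
  have hc : ∀ᵐ x ∂volume.restrict (Ioc a b), h x ≤ f a - f b :=
    ae_restrict_of_forall_mem measurableSet_Ioc fun x hx ↦ sub_le_sub_right (hf hx.1.le) _
  have hsplit :
      ∫ x in a..b, f x * φ x = (∫ x in Ioc a b, h x * φ x) + f b * ∫ x in a..b, φ x := by
    have hint : IntegrableOn (fun x ↦ h x * φ x) (Ioc a b) :=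
      hφ.1.bdd_mul hh.measurable.aestronglyMeasurable (c := f a - f b) <| by
        filter_upwards [h0, hc] with x hx0 hxc
        rwa [Real.norm_of_nonneg hx0]
    rw [intervalIntegral.integral_of_le hab, intervalIntegral.integral_of_le hab,
      ← integral_const_mul, ← integral_add hint (hφ.1.const_mul _)]
    simp only [h, sub_mul, sub_add_cancel]
  obtain ⟨_, ⟨ξ, hξ, rfl⟩, hmean⟩ :=
    (convex_iff_isPreconnected.2 (isPreconnected_Icc.image Φ hΦ)).exists_integral_eq_smul_mem
      (μ := volume.restrict (Ioc 0 (f a - f b)))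
      (isCompact_Icc.image_of_continuousOn hΦ).isClosed ((nonempty_Icc.2 hab).image Φ)
      (ae_of_all _ fun y ↦ by
        obtain ⟨t, ht, heq⟩ := hh.exists_setIntegral_lt_eq_intervalIntegral (φ := φ) hab y
        exact ⟨t, ht, heq.symm⟩)
      (integrableOn_setIntegral_lt hh.measurable hφ.1)
  refine ⟨ξ, hξ, ?_⟩
  rw [hsplit, integral_mul_eq_integral_Ioc_setIntegral_lt hh.measurable h0 hc hφ.1, hmean,
    measureReal_restrict_apply_univ, Real.volume_real_Ioc_of_le (sub_nonneg.2 (hf hab)),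
    ← intervalIntegral.integral_add_adjacent_intervals
      (hφ.mono_set (uIcc_subset_uIcc_left (Icc_subset_uIcc hξ)))
      (hφ.mono_set (uIcc_subset_uIcc_right (Icc_subset_uIcc hξ)))]
  simp only [smul_eq_mul, Φ]
  ring

theorem AntitoneOn.exists_intervalIntegral_mul_eq {f φ : ℝ → ℝ} {a b : ℝ} (hab : a ≤ b)
    (hf : AntitoneOn f (Icc a b)) (hφ : IntervalIntegrable φ volume a b) :
    ∃ ξ ∈ Icc a b,
      ∫ x in a..b, f x * φ x = f a * (∫ x in a..ξ, φ x) + f b * ∫ x in ξ..b, φ x := by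
  set F : ℝ → ℝ := fun x ↦ f (projIcc a b hab x)
  have hF : Antitone F := fun x y hxy ↦
    hf (projIcc a b hab x).2 (projIcc a b hab y).2 (monotone_projIcc hab hxy)
  have hFf : EqOn F f (Icc a b) := fun x hx ↦ by simp only [F, projIcc_of_mem hab hx]
  obtain ⟨ξ, hξ, hF_eq⟩ := hF.exists_intervalIntegral_mul_eq hab hφ
  refine ⟨ξ, hξ, ?_⟩
  rw [← hFf (left_mem_Icc.2 hab), ← hFf (right_mem_Icc.2 hab), ← hF_eq]
  refine intervalIntegral.integral_congr fun x hx ↦ ?_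
  rw [uIcc_of_le hab] at hx
  simp only [hFf hx]

theorem integral_cos_mul {c : ℝ} (hc : c ≠ 0) (a b : ℝ) :
    ∫ x in a..b, cos (c * x) = (sin (c * b) - sin (c * a)) / c := by
  rw [intervalIntegral.integral_comp_mul_left (fun x ↦ cos x) hc, integral_cos, smul_eq_mul,
    inv_mul_eq_div]

/-- Second mean value theorem applied to a monotone `g` composed with `G(cos θ)`:
there is `x₀ ∈ [0,π]` with `∫₀^π g(G(cos θ)) cos(jθ) dθ = ((g b - g a)/j) sin(j x₀)`;
in particular the integral is bounded by `(g b - g a)/j`. -/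
theorem integral_monotone_comp_cos_eq (a b : ℝ) (hab : a ≤ b) (g : ℝ → ℝ)
    (hg : MonotoneOn g (Icc a b)) (j : ℕ) (hj : 1 ≤ j) :
    ∃ x₀ ∈ Icc (0:ℝ) π,
      (∫ θ in (0:ℝ)..π, g (a + (b - a) / 2 * (cos θ + 1)) * cos (j * θ)) =
        ((g b - g a) / j) * sin (j * x₀) ∧
      |∫ θ in (0:ℝ)..π, g (a + (b - a) / 2 * (cos θ + 1)) * cos (j * θ)| ≤
        (g b - g a) / j := by
  have hu : ∀ θ, a + (b - a) / 2 * (cos θ + 1) ∈ Icc a b := fun θ ↦ by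
    constructor <;> nlinarith [neg_one_le_cos θ, cos_le_one θ]
  have hanti : AntitoneOn (fun θ ↦ g (a + (b - a) / 2 * (cos θ + 1))) (Icc 0 π) :=
    fun x hx y hy hxy ↦ hg (hu y) (hu x) <| by
      gcongr ?_ + (b - a) / 2 * (?_ + 1)
      · linarith
      · exact cos_le_cos_of_nonneg_of_le_pi hx.1 hy.2 hxy
  have hj0 : (j : ℝ) ≠ 0 := Nat.cast_ne_zero.2 (Nat.one_le_iff_ne_zero.1 hj)
  obtain ⟨ξ, hξ, hbonnet⟩ := hanti.exists_intervalIntegral_mul_eq pi_pos.le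
    ((by fun_prop : Continuous fun θ ↦ cos (j * θ)).intervalIntegrable _ _)
  have hval : ∫ θ in (0:ℝ)..π, g (a + (b - a) / 2 * (cos θ + 1)) * cos (j * θ) =
      (g b - g a) / j * sin (j * ξ) := by
    have hG0 : a + (b - a) / 2 * (cos 0 + 1) = b := by rw [cos_zero]; ring
    have hGπ : a + (b - a) / 2 * (cos π + 1) = a := by rw [cos_pi]; ring
    rw [hbonnet, hG0, hGπ, integral_cos_mul hj0, integral_cos_mul hj0, sin_nat_mul_pi, mul_zero,
      sin_zero]
    ring
  have hc : 0 ≤ (g b - g a) / j :=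
    div_nonneg (sub_nonneg.2 (hg (left_mem_Icc.2 hab) (right_mem_Icc.2 hab) hab)) j.cast_nonneg
  refine ⟨ξ, hξ, hval, ?_⟩
  rw [hval, abs_mul, abs_of_nonneg hc]
  exact mul_le_of_le_one_right hc (abs_sin_le_one _)
end

section
/- For any sequence of real numbers (c_j) that is absolutely summable, and integers n ≥ 1 and 0 ≤ k < 2n, the approximated Chebyshev coefficient c_{k,n} obtained from the n-point Gauss–Chebyshev quadrature satisfies c_{k,n} − c_k = Σ_{j=1}^∞ (−1)^j (c_{2jn−k} + c_{2jn+k}), where c_{k,n} = (2/n) Σ_{l=1}^n f(t_l) T_k(t_l) with t_l = cos((2l−1)π/(2n)), and c_k are the exact Chebyshev coefficients of f. -/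
/-!
Put `θ_l = (2l - 1)π / (2n)`, so that `t_l = cos θ_l` and `T_j(t_l) = cos (j θ_l)`. Extending the
coefficients evenly to `ℤ`, `f(t_l) = Σ_{m ∈ ℤ} (c_{|m|} / 2) cos (m θ_l)`, and by that evenness
`f(t_l) cos (k θ_l) = Σ_m (c_{|m|} / 2) cos ((m - k) θ_l)`. The nodes satisfy the discrete
orthogonality `(1/n) Σ_l cos (j θ_l) = (-1)^(j / 2n)` if `2n ∣ j` and `0` otherwise (for `2n ∤ j`
multiply by `2 sin (jπ / 2n)` and telescope), hence `c_{k,n} = Σ_{t ∈ ℤ} (-1)^t c_{|2nt + k|}`.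
The term `t = 0` is `c_k`, and as `k < 2n` the terms `t = ±(q + 1)` give
`(-1)^(q+1) (c_{2(q+1)n + k} + c_{2(q+1)n - k})`.
-/

open Real Polynomial Finset

noncomputable def aliasSign (n : ℕ) (m : ℤ) : ℝ :=
  if (2 * n : ℤ) ∣ m then (-1) ^ (m / (2 * n)) else 0

lemma aliasSign_two_mul_mul {n : ℕ} (hn : n ≠ 0) (t : ℤ) :
    aliasSign n (2 * n * t) = (-1) ^ t := by
  rw [aliasSign, if_pos (dvd_mul_right _ _), Int.mul_ediv_cancel_left _ (by positivity)]

lemma aliasSign_of_not_dvd {n : ℕ} {m : ℤ} (h : ¬ (2 * n : ℤ) ∣ m) : aliasSign n m = 0 :=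
  if_neg h

lemma two_mul_sin_mul_sum_cos_odd_mul (α : ℝ) (N : ℕ) :
    2 * sin α * ∑ l ∈ Icc 1 N, cos ((2 * l - 1) * α) = sin (2 * N * α) := by
  induction N with
  | zero => simp
  | succ N ih =>
    rw [sum_Icc_succ_top (by omega), mul_add, ih, two_mul_sin_mul_cos]
    push_cast
    rw [show α - (2 * (N + 1) - 1) * α = -(2 * N * α) by ring, sin_neg]
    ring_nf

theorem sum_cos_mul_chebyshevAngle {n : ℕ} (hn : n ≠ 0) (m : ℤ) :
    ∑ l ∈ Icc 1 n, cos (m * ((2 * l - 1) * π / (2 * n))) = n * aliasSign n m := by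
  by_cases hdvd : (2 * n : ℤ) ∣ m
  · obtain ⟨t, rfl⟩ := hdvd
    have hterm (l : ℕ) : cos (2 * n * t * ((2 * l - 1) * π / (2 * n))) = (-1) ^ t := by
      rw [← cos_int_mul_pi, ← cos_int_mul_two_pi_sub _ (t * l)]
      congr 1
      push_cast
      field_simp
      ring
    simp [hterm, aliasSign_two_mul_mul hn]
  · set α : ℝ := m * π / (2 * n) with hα
    have hnα : 2 * n * α = m * π := by rw [hα]; field_simp
    have hsin : sin α ≠ 0 := by
      rw [Ne, sin_eq_zero_iff]
      rintro ⟨t, ht⟩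
      refine hdvd ⟨t, ?_⟩
      have : (m : ℝ) * π = 2 * n * t * π := by rw [← hnα, ← ht]; ring
      exact_mod_cast mul_right_cancel₀ pi_ne_zero this
    have htelescope := two_mul_sin_mul_sum_cos_odd_mul α n
    rw [hnα, sin_int_mul_pi] at htelescope
    rw [aliasSign_of_not_dvd hdvd, mul_zero]
    convert (mul_eq_zero.mp htelescope).resolve_left (by simpa using hsin) using 3 with l
    ring

lemma injective_two_mul_mul_add {n : ℕ} (hn : n ≠ 0) (k : ℤ) :
    Function.Injective fun t : ℤ => 2 * n * t + k := fun t t' h => by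
  simpa [hn] using h

lemma Summable.mul_of_abs_le_one {ι : Type*} {a b : ι → ℝ} (ha : Summable a)
    (hb : ∀ i, |b i| ≤ 1) : Summable fun i => a i * b i :=
  ha.abs.of_norm_bounded fun i => by
    rw [norm_mul]
    exact mul_le_of_le_one_right (abs_nonneg _) (hb i)

lemma Summable.comp_natAbs {G : Type*} [AddCommGroup G] [TopologicalSpace G]
    [IsTopologicalAddGroup G] {c : ℕ → G} (hc : Summable c) :
    Summable fun m : ℤ => c m.natAbs :=
  .of_nat_of_neg (f := fun m : ℤ => c m.natAbs) hc (by simpa using hc)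

lemma hasSum_natAbs_div_two_mul_cos {c : ℕ → ℝ} (hc : Summable c) (θ : ℝ) :
    HasSum (fun m : ℤ => c m.natAbs / 2 * cos (m * θ))
      (c 0 / 2 + ∑' j : ℕ, c (j + 1) * cos ((j + 1) * θ)) := by
  have hsum : Summable fun j : ℕ => c (j + 1) * cos ((j + 1) * θ) :=
    ((summable_nat_add_iff 1).mpr hc).mul_of_abs_le_one fun _ => abs_cos_le_one _
  have hhalf := hsum.hasSum.div_const 2
  convert HasSum.of_add_one_of_neg_add_one (f := fun m : ℤ => c m.natAbs / 2 * cos (m * θ))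
    (hhalf.congr_fun fun j => ?_) (hhalf.congr_fun fun j => ?_) using 1
  · simp only [Int.natAbs_zero, Int.cast_zero, zero_mul, cos_zero, mul_one]
    ring
  · rw [show ((j : ℤ) + 1).natAbs = j + 1 by omega]
    push_cast
    ring
  · rw [show (-((j : ℤ) + 1)).natAbs = j + 1 by omega]
    push_cast
    rw [neg_mul, cos_neg]
    ring

lemma hasSum_mul_cos_sub_of_even {a : ℤ → ℝ} (heven : ∀ m, a (-m) = a m) (ha : Summable a)
    {θ s : ℝ} (hs : HasSum (fun m : ℤ => a m * cos (m * θ)) s) (k : ℝ) :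
    HasSum (fun m : ℤ => a m * cos ((m - k) * θ)) (s * cos (k * θ)) := by
  have hsub : Summable fun m : ℤ => a m * cos ((m - k) * θ) :=
    ha.mul_of_abs_le_one fun _ => abs_cos_le_one _
  have hadd : Summable fun m : ℤ => a m * cos ((m + k) * θ) :=
    ha.mul_of_abs_le_one fun _ => abs_cos_le_one _
  have hreflect : ∑' m : ℤ, a m * cos ((m + k) * θ) = ∑' m : ℤ, a m * cos ((m - k) * θ) := by
    rw [← (Equiv.neg ℤ).tsum_eq]
    congr with m
    rw [Equiv.neg_apply, heven, ← cos_neg]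
    push_cast
    ring_nf
  have hprod : ∑' m : ℤ, (a m * cos ((m + k) * θ) + a m * cos ((m - k) * θ)) =
      s * (2 * cos (k * θ)) := by
    rw [← (hs.mul_right (2 * cos (k * θ))).tsum_eq]
    congr with m
    rw [add_mul, sub_mul, cos_add, cos_sub]
    ring
  rw [hadd.tsum_add hsub, hreflect] at hprod
  exact hsub.hasSum_iff.mpr (by linarith)

theorem hasSum_natAbs_mul_aliasSign {c : ℕ → ℝ} (hc : Summable c) {n : ℕ} (hn : n ≠ 0) (k : ℤ) :
    HasSum (fun m : ℤ => c m.natAbs * aliasSign n (m - k))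
      ((2 / (n : ℝ)) * ∑ l ∈ Icc 1 n,
        (c 0 / 2 + ∑' j : ℕ, c (j + 1) *
            (Chebyshev.T ℝ (j + 1 : ℕ)).eval (cos ((2 * (l : ℝ) - 1) * π / (2 * n)))) *
          (Chebyshev.T ℝ k).eval (cos ((2 * (l : ℝ) - 1) * π / (2 * n)))) := by
  have hnode (l : ℕ) := hasSum_mul_cos_sub_of_even (fun m => by rw [Int.natAbs_neg])
    (hc.comp_natAbs.div_const 2)
    (hasSum_natAbs_div_two_mul_cos hc ((2 * (l : ℝ) - 1) * π / (2 * n))) k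
  simp only [Chebyshev.T_real_cos]
  push_cast
  rw [mul_sum]
  refine (hasSum_sum fun l _ => (hnode l).mul_left (2 / (n : ℝ))).congr_fun fun m => ?_
  rw [← mul_sum, ← mul_sum, ← Int.cast_sub, sum_cos_mul_chebyshevAngle hn]
  field_simp

theorem tsum_mul_aliasSign_sub {n : ℕ} (hn : n ≠ 0) (g : ℤ → ℝ) (k : ℤ) :
    ∑' m : ℤ, g m * aliasSign n (m - k) = ∑' t : ℤ, (-1) ^ t * g (2 * n * t + k) := by
  rw [← (injective_two_mul_mul_add hn k).tsum_eq]
  · congr with t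
    rw [add_sub_cancel_right, aliasSign_two_mul_mul hn, mul_comm]
  · intro m hm
    obtain ⟨t, ht⟩ : (2 * n : ℤ) ∣ m - k := by
      by_contra h
      exact hm (by simp only [aliasSign_of_not_dvd h, mul_zero])
    exact ⟨t, by linarith⟩

theorem tsum_neg_one_zpow_mul_natAbs {c : ℕ → ℝ} (hc : Summable c) {n k : ℕ} (hk : k < 2 * n) :
    ∑' t : ℤ, (-1 : ℝ) ^ t * c (2 * n * t + k).natAbs =
      c k + ∑' q : ℕ, (-1 : ℝ) ^ (q + 1) * (c (2 * (q + 1) * n - k) + c (2 * (q + 1) * n + k)) := by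
  have hinj := injective_two_mul_mul_add (n := n) (by omega) k
  have hsum : Summable fun t : ℤ => (-1 : ℝ) ^ t * c (2 * n * t + k).natAbs :=
    (hc.comp_natAbs.comp_injective hinj).abs.of_norm_bounded fun t => by simp
  have hpos (q : ℕ) : (-1 : ℝ) ^ ((q : ℤ) + 1) * c (2 * n * ((q : ℤ) + 1) + k).natAbs =
      (-1) ^ (q + 1) * c (2 * (q + 1) * n + k) := by
    rw [show 2 * n * ((q : ℤ) + 1) + k = ((2 * (q + 1) * n + k : ℕ) : ℤ) by push_cast; ring,
      Int.natAbs_natCast]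
    norm_cast
  have hneg (q : ℕ) : (-1 : ℝ) ^ (-((q : ℤ) + 1)) * c (2 * n * (-((q : ℤ) + 1)) + k).natAbs =
      (-1) ^ (q + 1) * c (2 * (q + 1) * n - k) := by
    have hle : k ≤ 2 * (q + 1) * n := by nlinarith
    rw [show 2 * n * (-((q : ℤ) + 1)) + k = -((2 * (q + 1) * n - k : ℕ) : ℤ) by
      push_cast [hle]; ring, Int.natAbs_neg, Int.natAbs_natCast, zpow_neg, ← inv_zpow, inv_neg,
      inv_one]
    norm_cast
  have hsucc : Function.Injective fun q : ℕ => (q : ℤ) + 1 := fun _ _ h => by simpa using h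
  have hnegsucc : Function.Injective fun q : ℕ => -((q : ℤ) + 1) := fun _ _ h => by simpa using h
  rw [tsum_of_add_one_of_neg_add_one (f := fun t : ℤ => (-1 : ℝ) ^ t * c (2 * n * t + k).natAbs)
    (hsum.comp_injective hsucc) (hsum.comp_injective hnegsucc)]
  simp only [hpos, hneg]
  rw [tsum_congr fun q => mul_add ((-1 : ℝ) ^ (q + 1)) _ _, Summable.tsum_add
    ((hsum.comp_injective hnegsucc).congr hneg) ((hsum.comp_injective hsucc).congr hpos)]
  simp only [zpow_ofNat, pow_zero, mul_zero, zero_add, Int.natAbs_natCast, one_mul]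
  ring

theorem chebyshev_aliasing_general (c : ℕ → ℝ) (hc : Summable fun j => |c j|)
    (n : ℕ) (k : ℕ) (hk : k < 2 * n) :
    (2 / (n : ℝ)) * ∑ l ∈ Finset.Icc 1 n,
        (c 0 / 2 + ∑' j : ℕ, c (j + 1) *
            (Chebyshev.T ℝ (j + 1 : ℕ)).eval (cos ((2 * (l : ℝ) - 1) * π / (2 * n)))) *
          (Chebyshev.T ℝ (k : ℕ)).eval (cos ((2 * (l : ℝ) - 1) * π / (2 * n))) -
      c k =
    ∑' j : ℕ, (-1 : ℝ) ^ (j + 1) * (c (2 * (j + 1) * n - k) + c (2 * (j + 1) * n + k)) := by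
  have hn : n ≠ 0 := by omega
  rw [← (hasSum_natAbs_mul_aliasSign hc.of_abs hn k).tsum_eq, tsum_mul_aliasSign_sub hn,
    tsum_neg_one_zpow_mul_natAbs hc.of_abs hk, add_sub_cancel_left]

/-- Aliasing identity: for an absolutely summable Chebyshev coefficient sequence `(c_j)`
of `f(t) = c₀/2 + Σ_{j≥1} c_j T_j(t)`, the `n`-point Gauss–Chebyshev quadrature
approximations `c_{k,n} = (2/n) Σ_{l=1}^n f(t_l) T_k(t_l)`, with `t_l = cos((2l-1)π/(2n))`,
satisfy `c_{k,n} - c_k = Σ_{j=1}^∞ (-1)^j (c_{2jn-k} + c_{2jn+k})` for `0 ≤ k < 2n`. -/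
theorem chebyshev_aliasing (c : ℕ → ℝ) (hc : Summable fun j => |c j|)
    (n : ℕ) (hn : 1 ≤ n) (k : ℕ) (hk : k < 2 * n) :
    (2 / (n : ℝ)) * ∑ l ∈ Finset.Icc 1 n,
        (c 0 / 2 + ∑' j : ℕ, c (j + 1) *
            (Chebyshev.T ℝ (j + 1 : ℕ)).eval (cos ((2 * (l : ℝ) - 1) * π / (2 * n)))) *
          (Chebyshev.T ℝ (k : ℕ)).eval (cos ((2 * (l : ℝ) - 1) * π / (2 * n))) -
      c k =
    ∑' j : ℕ, (-1 : ℝ) ^ (j + 1) * (c (2 * (j + 1) * n - k) + c (2 * (j + 1) * n + k)) :=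
  chebyshev_aliasing_general c hc n k hk
end

section
/- Let (c_j) be a summable sequence of nonnegative real numbers, and let n ≥ 1, d = n − l with 1 ≤ l ≤ n. Then Σ_{j=d+1}^∞ c_j + Σ_{j=1}^∞ Σ_{i=2jn−d}^{2jn+d} c_i ≤ 2 Σ_{i=n−l+1}^∞ c_i. -/
/-!
Since `d < n`, the windows `[2jn - d, 2jn + d]` (`j ≥ 1`) are pairwise disjoint and lie above `d`,
so the double sum adds up distinct coefficients of the tail `Σ_{i > d} c_i` and is bounded by it.
-/

open Finset Function

/-- The `(j + 1)`-th window of the aliasing double sum, shifted so that `j` ranges over `ℕ`. -/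
def aliasWindow (n d j : ℕ) : Finset ℕ :=
  Icc (2 * (j + 1) * n - d) (2 * (j + 1) * n + d)

lemma aliasWindow_pairwise_disjoint {n d : ℕ} (hd : d < n) :
    Pairwise (Disjoint on aliasWindow n d) := by
  refine (pairwise_disjoint_on _).mpr fun j k hjk => ?_
  have hgap : 2 * (j + 1) * n + 2 * n ≤ 2 * (k + 1) * n := by nlinarith
  rw [disjoint_left]
  intro i hij hik
  simp only [aliasWindow, mem_Icc] at hij hik
  omega

lemma lt_of_mem_aliasWindow {n d j i : ℕ} (hd : d < n) (hi : i ∈ aliasWindow n d j) :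
    d < i := by
  have : 2 * n ≤ 2 * (j + 1) * n := by nlinarith
  simp only [aliasWindow, mem_Icc] at hi
  omega

section Tail

variable {f : ℕ → ℝ} {m : ℕ}

lemma sum_le_tsum_nat_add (hf0 : ∀ i, 0 ≤ f i) (hf : Summable f) {s : Finset ℕ}
    (hs : ∀ i ∈ s, m ≤ i) :
    ∑ i ∈ s, f i ≤ ∑' k, f (m + k) := by
  have hshift : Summable fun k => f (m + k) := hf.comp_injective (add_right_injective m)
  calc ∑ i ∈ s, f i = ∑ k ∈ s.image (· - m), f (m + k) := by
        have hinj : Set.InjOn (· - m) (s : Set ℕ) := fun a ha b hb (hab : a - m = b - m) => by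
          have := hs a ha; have := hs b hb; omega
        rw [sum_image hinj]
        exact sum_congr rfl fun i hi => by rw [Nat.add_sub_cancel' (hs i hi)]
    _ ≤ ∑' k, f (m + k) := hshift.sum_le_tsum _ fun k _ => hf0 _

lemma tsum_sum_le_tsum_nat_add (hf0 : ∀ i, 0 ≤ f i) (hf : Summable f) {ι : Type*}
    {t : ι → Finset ℕ} (ht : Pairwise (Disjoint on t)) (htm : ∀ j, ∀ i ∈ t j, m ≤ i) :
    ∑' j, ∑ i ∈ t j, f i ≤ ∑' k, f (m + k) := by
  refine Real.tsum_le_of_sum_le (fun j => sum_nonneg fun i _ => hf0 i) fun u => ?_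
  rw [← sum_biUnion (ht.set_pairwise _)]
  refine sum_le_tsum_nat_add hf0 hf fun i hi => ?_
  obtain ⟨j, -, hij⟩ := mem_biUnion.mp hi
  exact htm j i hij

end Tail

theorem aliasing_tail_bound_minus_general (c : ℕ → ℝ) (hc0 : ∀ j, 0 ≤ c j) (hc : Summable c)
    (n l : ℕ) (hn : 1 ≤ n) (hl : 1 ≤ l) :
    (∑' j : ℕ, c (n - l + 1 + j)) +
        ∑' j : ℕ, ∑ i ∈ Finset.Icc (2 * (j + 1) * n - (n - l)) (2 * (j + 1) * n + (n - l)), c i ≤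
      2 * ∑' j : ℕ, c (n - l + 1 + j) := by
  have hd : n - l < n := Nat.sub_lt hn hl
  rw [two_mul]
  exact add_le_add le_rfl <| tsum_sum_le_tsum_nat_add hc0 hc (aliasWindow_pairwise_disjoint hd)
    fun _ _ hi => lt_of_mem_aliasWindow hd hi

/-- Series estimate for `d = n - l`, `1 ≤ l ≤ n`:
`Σ_{j=d+1}^∞ c_j + Σ_{j=1}^∞ Σ_{i=2jn-d}^{2jn+d} c_i ≤ 2 Σ_{i=n-l+1}^∞ c_i`
for nonnegative summable `(c_j)`. -/
theorem aliasing_tail_bound_minus (c : ℕ → ℝ) (hc0 : ∀ j, 0 ≤ c j) (hc : Summable c)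
    (n l : ℕ) (hn : 1 ≤ n) (hl : 1 ≤ l) (hln : l ≤ n) :
    (∑' j : ℕ, c (n - l + 1 + j)) +
        ∑' j : ℕ, ∑ i ∈ Finset.Icc (2 * (j + 1) * n - (n - l)) (2 * (j + 1) * n + (n - l)), c i ≤
      2 * ∑' j : ℕ, c (n - l + 1 + j) :=
  aliasing_tail_bound_minus_general c hc0 hc n l hn hl
end

section
/- Let (c_j) be a summable sequence of nonnegative real numbers, and let n ≥ 1, d = n + l with 0 ≤ l ≤ n − 1. Then Σ_{j=d+1}^∞ c_j + Σ_{j=1}^∞ Σ_{i=2jn−d}^{2jn+d} c_i ≤ 3 Σ_{i=n−l}^∞ c_i. -/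
/-!
Shift the index by `n - l`, so that the tail `∑_{i ≥ n - l} c_i` becomes the full sum of
`f i = c (n - l + i)`. The tail `∑_{j > d} c_j` is a subseries of it. The `j`-th window becomes
`[2nj, 2n(j+1) + 2l]`, which splits into the block `[2nj, 2n(j+1))` and a piece of length
`2l + 1 ≤ 2n` at the start of the next block; blocks are pairwise disjoint, so each of the two
families of pieces contributes at most `∑ f`.
-/

open Finset Function

section PairwiseDisjoint

variable {f : ℕ → ℝ} {F : ℕ → Finset ℕ}

theorem sum_range_sum_le_tsum_of_pairwise_disjoint (hf0 : ∀ i, 0 ≤ f i) (hf : Summable f)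
    (hF : Pairwise (Disjoint on F)) (N : ℕ) :
    ∑ j ∈ range N, ∑ i ∈ F j, f i ≤ ∑' i, f i := by
  rw [← sum_biUnion (hF.set_pairwise _)]
  exact hf.sum_le_tsum _ fun i _ => hf0 i

theorem summable_sum_of_pairwise_disjoint (hf0 : ∀ i, 0 ≤ f i) (hf : Summable f)
    (hF : Pairwise (Disjoint on F)) : Summable fun j => ∑ i ∈ F j, f i :=
  summable_of_sum_range_le (fun _ => sum_nonneg fun i _ => hf0 i)
    (sum_range_sum_le_tsum_of_pairwise_disjoint hf0 hf hF)

theorem tsum_sum_le_tsum_of_pairwise_disjoint (hf0 : ∀ i, 0 ≤ f i) (hf : Summable f)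
    (hF : Pairwise (Disjoint on F)) : ∑' j, ∑ i ∈ F j, f i ≤ ∑' i, f i :=
  Real.tsum_le_of_sum_range_le (fun _ => sum_nonneg fun i _ => hf0 i)
    (sum_range_sum_le_tsum_of_pairwise_disjoint hf0 hf hF)

end PairwiseDisjoint

theorem pairwise_disjoint_Ico_mul (k : ℕ) :
    Pairwise (Disjoint on fun j => Ico (k * j) (k * (j + 1))) := by
  intro j j' h
  simpa [onFun, ← disjoint_coe] using (mul_right_mono (a := k)).pairwise_disjoint_on_Ico_succ h

theorem tsum_sum_Ico_mul_add_le_two_mul_tsum {f : ℕ → ℝ} (hf0 : ∀ i, 0 ≤ f i)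
    (hf : Summable f) {k r : ℕ} (hr : r ≤ k) :
    ∑' j, ∑ i ∈ Ico (k * j) (k * (j + 1) + r), f i ≤ 2 * ∑' i, f i := by
  set A : ℕ → Finset ℕ := fun j => Ico (k * j) (k * (j + 1))
  set B : ℕ → Finset ℕ := fun j => Ico (k * (j + 1)) (k * (j + 1) + r)
  have hA : Pairwise (Disjoint on A) := pairwise_disjoint_Ico_mul k
  have hBA : ∀ j, B j ⊆ A (j + 1) := fun j =>
    Ico_subset_Ico_right (by rw [mul_add k (j + 1) 1, mul_one]; omega)
  have hB : Pairwise (Disjoint on B) := fun j j' h =>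
    (hA (by simpa using h)).mono (hBA j) (hBA j')
  have hsplit : ∀ j, ∑ i ∈ Ico (k * j) (k * (j + 1) + r), f i
      = ∑ i ∈ A j, f i + ∑ i ∈ B j, f i := fun j =>
    (sum_Ico_consecutive f (Nat.mul_le_mul_left k j.le_succ) (Nat.le_add_right _ r)).symm
  rw [tsum_congr hsplit, Summable.tsum_add (summable_sum_of_pairwise_disjoint hf0 hf hA)
    (summable_sum_of_pairwise_disjoint hf0 hf hB), two_mul]
  exact add_le_add (tsum_sum_le_tsum_of_pairwise_disjoint hf0 hf hA)
    (tsum_sum_le_tsum_of_pairwise_disjoint hf0 hf hB)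

/-- Series estimate for `d = n + l`, `0 ≤ l ≤ n - 1`:
`Σ_{j=d+1}^∞ c_j + Σ_{j=1}^∞ Σ_{i=2jn-d}^{2jn+d} c_i ≤ 3 Σ_{i=n-l}^∞ c_i`
for nonnegative summable `(c_j)`. -/
theorem aliasing_tail_bound_plus (c : ℕ → ℝ) (hc0 : ∀ j, 0 ≤ c j) (hc : Summable c)
    (n l : ℕ) (hn : 1 ≤ n) (hl : l ≤ n - 1) :
    (∑' j : ℕ, c (n + l + 1 + j)) +
        ∑' j : ℕ, ∑ i ∈ Finset.Icc (2 * (j + 1) * n - (n + l)) (2 * (j + 1) * n + (n + l)), c i ≤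
      3 * ∑' j : ℕ, c (n - l + j) := by
  set f : ℕ → ℝ := fun i => c (n - l + i)
  have hf0 : ∀ i, 0 ≤ f i := fun i => hc0 _
  have hf : Summable f := by simpa only [f, add_comm] using (summable_nat_add_iff (n - l)).2 hc
  have htail : ∑' j, c (n + l + 1 + j) ≤ ∑' i, f i := by
    have hshift : ∑' j, c (n + l + 1 + j) = ∑' j, f (2 * l + 1 + j) :=
      tsum_congr fun j => congrArg c (by omega)
    exact hshift ▸ tsum_comp_le_tsum_of_inj hf hf0 (add_right_injective (2 * l + 1))
  have hwindow : ∀ j, ∑ i ∈ Icc (2 * (j + 1) * n - (n + l)) (2 * (j + 1) * n + (n + l)), c i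
      = ∑ i ∈ Ico (2 * n * j) (2 * n * (j + 1) + (2 * l + 1)), f i := by
    intro j
    rw [sum_Ico_add c, ← Ico_add_one_right_eq_Icc, show 2 * (j + 1) * n = 2 * n * j + 2 * n by ring,
      show 2 * n * (j + 1) = 2 * n * j + 2 * n by ring]
    congr 2 <;> omega
  rw [tsum_congr hwindow]
  linarith [tsum_sum_Ico_mul_add_le_two_mul_tsum hf0 hf (show 2 * l + 1 ≤ 2 * n by omega)]
end
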